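/- arXiv:math-ph/0210047 — 2 statements merged into one kernel-verified Lean document; each statement's English description precedes it below -/
import Mathlib

section
/- Let $(X,d)$ be a metric space, $h > 0$, and $U, V \subseteq X$ open sets with $U \setminus \partial_h U \subseteq V \subseteq U \cup \partial_h U$. Then the topological boundary of $V$ is contained in the $h$-boundary of $U$: $\partial V \subseteq \partial_h U$. -/
/-- The `h`-boundary of a set `D` in a metric space:
points within distance `h` of the topological boundary of `D`. -/
def hBoundary {X : Type*} [MetricSpace X] (h : ℝ) (D : Set X) : Set X :=
  {x : X | Metric.infDist x (frontier D) ≤ h}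

theorem frontier_subset_hBoundary {X : Type*} [MetricSpace X] (h : ℝ) (hh : 0 < h)
    (U V : Set X) (hU : IsOpen U) (hV : IsOpen V)
    (h1 : U \ hBoundary h U ⊆ V) (h2 : V ⊆ U ∪ hBoundary h U) :
    frontier V ⊆ hBoundary h U := by
  intro x hx
  by_contra hc
  have hxnV : x ∉ V := by
    rw [hV.frontier_eq] at hx
    exact hx.2
  by_cases hxU : x ∈ U
  · exact hxnV (h1 ⟨hxU, hc⟩)
  · have hclosed : IsClosed (hBoundary h U) :=
      isClosed_le (Metric.continuous_infDist_pt _) continuous_const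
    have hxcl : x ∈ closure V := frontier_subset_closure hx
    have : x ∈ closure U ∪ hBoundary h U := by
      have := closure_mono h2 hxcl
      rwa [closure_union, hclosed.closure_eq] at this
    rcases this with hcU | hB
    · have hfr : x ∈ frontier U := ⟨hcU, by rwa [hU.interior_eq]⟩
      have h0 : Metric.infDist x (frontier U) = 0 := Metric.infDist_zero_of_mem hfr
      exact hc (show Metric.infDist x (frontier U) ≤ h from h0 ▸ hh.le)
    · exact hc hB
end

section
/- Let $\Gamma$ be a finitely generated group with finite symmetric generating set $E$ containing the identity, whose word-metric balls $E^r$ satisfy polynomial growth bounds $r^k/C \leq |E^r| \leq Cr^k$ for all $r \in \mathbb{N}$ (with $C \geq 1$, $k \geq 1$ fixed). Then there exists an increasing sequence of integer radii $r_1 < r_2 < \cdots$ such that for every $d \in \mathbb{N}$, $|E^{r_n+d} \setminus E^{r_n-d}|/|E^{r_n}| \to 0$ as $n \to \infty$. -/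
open Filter Finset
open scoped Pointwise

theorem annuli_subsequence {Γ : Type*} [Group Γ] [DecidableEq Γ]
    (E : Finset Γ) (hE1 : (1 : Γ) ∈ E) (hEsymm : E⁻¹ = E)
    (C : ℝ) (hC : 1 ≤ C) (k : ℕ) (hk : 1 ≤ k)
    (hgrowth : ∀ r : ℕ, 0 < r →
      (r : ℝ) ^ k / C ≤ ((E ^ r).card : ℝ) ∧ ((E ^ r).card : ℝ) ≤ C * (r : ℝ) ^ k) :
    ∃ r : ℕ → ℕ, StrictMono r ∧
      ∀ d : ℕ, Tendsto
        (fun n => (((E ^ (r n + d)) \ (E ^ (r n - d))).card : ℝ) / ((E ^ r n).card : ℝ))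
        atTop (nhds 0) := by
  have hC0 : (0:ℝ) < C := lt_of_lt_of_le one_pos hC
  -- key existence: for each n, pick a good radius
  have key : ∀ n : ℕ, ∃ r : ℕ,
      (2*(n+1)^3 + (n+1) ≤ r ∧ r ≤ 2*(n+1)^3 + 2*(n+1)*n + (n+1)) ∧
      ∀ d : ℕ, d ≤ n+1 →
        (((E ^ (r + d)) \ (E ^ (r - d))).card : ℝ) / ((E ^ r).card : ℝ)
          ≤ C^2 * 2^k / (n+1) := by
    intro n
    set m : ℕ := 2*(n+1)^3 with hm
    set L : ℕ := 2*(n+1) with hL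
    have hfmono : ∀ a b : ℕ, a ≤ b → ((E ^ a).card : ℝ) ≤ ((E ^ b).card : ℝ) := by
      intro a b hab
      exact_mod_cast Finset.card_le_card (Finset.pow_subset_pow_right hE1 hab)
    -- pigeonhole
    have pig : ∃ i ≤ n, ((E ^ (m + L*(i+1))).card : ℝ) - ((E ^ (m + L*i)).card : ℝ)
        ≤ C * (2*m)^k / (n+1) := by
      by_contra h
      push_neg at h
      have hsum : ∑ i ∈ Finset.range (n+1),
          (((E ^ (m + L*(i+1))).card : ℝ) - ((E ^ (m + L*i)).card : ℝ))
          = ((E ^ (m + L*(n+1))).card : ℝ) - ((E ^ (m + L*0)).card : ℝ) :=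
        Finset.sum_range_sub (fun i => ((E ^ (m + L*i)).card : ℝ)) (n+1)
      have hlb : ∀ i ∈ Finset.range (n+1),
          C * (2*m)^k / (n+1) < ((E ^ (m + L*(i+1))).card : ℝ) - ((E ^ (m + L*i)).card : ℝ) := by
        intro i hi
        exact h i (Nat.lt_succ_iff.mp (Finset.mem_range.mp hi))
      have hcard : (n+1 : ℝ) * (C * (2*m)^k / (n+1)) < ∑ i ∈ Finset.range (n+1),
          (((E ^ (m + L*(i+1))).card : ℝ) - ((E ^ (m + L*i)).card : ℝ)) := by
        have := Finset.sum_lt_sum_of_nonempty (Finset.nonempty_range_iff.mpr (Nat.succ_ne_zero n))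
          hlb
        simpa [Finset.sum_const, Finset.card_range, mul_comm] using this
      have hn1 : (0:ℝ) < (n+1 : ℝ) := by positivity
      rw [hsum] at hcard
      have h1 : (n+1 : ℝ) * (C * (2*m)^k / (n+1)) = C * (2*m)^k := by
        field_simp
      rw [h1] at hcard
      -- upper bound on card
      have hub : ((E ^ (m + L*(n+1))).card : ℝ) ≤ C * (2*m : ℝ)^k := by
        have hpos : 0 < m + L*(n+1) := by positivity
        have := (hgrowth (m + L*(n+1)) hpos).2
        refine this.trans ?_
        have hle : ((m + L*(n+1) : ℕ) : ℝ) ≤ (2*m : ℝ) := by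
          have hsq : (n+1)^2 ≤ (n+1)^3 := Nat.pow_le_pow_right (Nat.succ_pos n) (by norm_num)
          have : m + L*(n+1) ≤ 2*m := by
            have h1 : m + L*(n+1) = 2*(n+1)^3 + 2*(n+1)^2 := by rw [hm, hL]; ring
            have h2 : 2*m = 2*(n+1)^3 + 2*(n+1)^3 := by rw [hm]; ring
            omega
          exact_mod_cast this
        have h0 : (0:ℝ) ≤ ((m + L*(n+1) : ℕ) : ℝ) := by positivity
        have := pow_le_pow_left₀ h0 hle k
        nlinarith
      have hlow : (0:ℝ) ≤ ((E ^ (m + L*0)).card : ℝ) := by positivity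
      have h2m : ((2*m : ℕ):ℝ) = (2*m : ℝ) := by push_cast; ring
      nlinarith
    obtain ⟨i, hi, hdiff⟩ := pig
    refine ⟨m + L*i + (n+1), ⟨?_, ?_⟩, ?_⟩
    · omega
    · have : L*i ≤ L*n := Nat.mul_le_mul_left L hi
      simp only [hL] at this ⊢
      omega
    intro d hd
    set r : ℕ := m + L*i + (n+1) with hr
    -- numerator bound
    have hLi : L*(i+1) = L*i + 2*(n+1) := by rw [hL]; ring
    have hsub1 : E ^ (r + d) ⊆ E ^ (m + L*(i+1)) :=
      Finset.pow_subset_pow_right hE1 (by rw [hLi]; omega)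
    have hsub2 : E ^ (m + L*i) ⊆ E ^ (r - d) :=
      Finset.pow_subset_pow_right hE1 (by omega)
    have hsdiff : (E ^ (r + d)) \ (E ^ (r - d)) ⊆ (E ^ (m + L*(i+1))) \ (E ^ (m + L*i)) :=
      Finset.sdiff_subset_sdiff hsub1 hsub2
    have hsubmono : E ^ (m + L*i) ⊆ E ^ (m + L*(i+1)) :=
      Finset.pow_subset_pow_right hE1 (by rw [hLi]; omega)
    have hnum : (((E ^ (r + d)) \ (E ^ (r - d))).card : ℝ)
        ≤ C * (2*m)^k / (n+1) := by
      have h1 : ((E ^ (r + d)) \ (E ^ (r - d))).card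
          ≤ ((E ^ (m + L*(i+1))) \ (E ^ (m + L*i))).card :=
        Finset.card_le_card hsdiff
      have h2 : ((E ^ (m + L*(i+1))) \ (E ^ (m + L*i))).card
          = (E ^ (m + L*(i+1))).card - (E ^ (m + L*i)).card :=
        Finset.card_sdiff_of_subset hsubmono
      have h3 : (E ^ (m + L*i)).card ≤ (E ^ (m + L*(i+1))).card :=
        Finset.card_le_card hsubmono
      have : (((E ^ (r + d)) \ (E ^ (r - d))).card : ℝ)
          ≤ ((E ^ (m + L*(i+1))).card : ℝ) - ((E ^ (m + L*i)).card : ℝ) := by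
        rw [← Nat.cast_sub h3]
        exact_mod_cast h1.trans_eq h2
      linarith
    -- denominator bound
    have hmr : (0:ℝ) < (m:ℝ) := by positivity
    have hdenom : ((m:ℝ))^k / C ≤ ((E ^ r).card : ℝ) := by
      have hpos : 0 < r := by simp only [hr]; omega
      refine le_trans ?_ (hgrowth r hpos).1
      have : (m:ℝ) ≤ (r:ℝ) := by
        have : m ≤ r := by simp only [hr]; omega
        exact_mod_cast this
      gcongr
    have hdpos : (0:ℝ) < ((m:ℝ))^k / C := by positivity
    have hcardpos : (0:ℝ) < ((E ^ r).card : ℝ) := lt_of_lt_of_le hdpos hdenom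
    have hnum0 : (0:ℝ) ≤ (((E ^ (r + d)) \ (E ^ (r - d))).card : ℝ) := by positivity
    calc (((E ^ (r + d)) \ (E ^ (r - d))).card : ℝ) / ((E ^ r).card : ℝ)
        ≤ (C * (2*m)^k / (n+1)) / (((m:ℝ))^k / C) := by
          apply div_le_div₀ (by positivity) hnum hdpos hdenom
      _ = C^2 * 2^k / (n+1) := by
          have hmk : ((m:ℝ))^k ≠ 0 := by positivity
          rw [mul_pow]
          field_simp
  choose r hr1 hr2 using key
  have hmono : StrictMono r := by
    have step : ∀ n, r n < r (n+1) := by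
      intro n
      have h1 := (hr1 n).2
      have h2 := (hr1 (n+1)).1
      nlinarith
    exact strictMono_nat_of_lt_succ step
  refine ⟨r, hmono, ?_⟩
  intro d
  have hlim : Tendsto (fun n : ℕ => C^2 * 2^k / (n+1 : ℝ)) atTop (nhds 0) := by
    have := tendsto_const_div_atTop_nhds_zero_nat (C^2 * 2^k)
    have h2 : Tendsto (fun n : ℕ => n + 1) atTop atTop := tendsto_add_atTop_nat 1
    refine (this.comp h2).congr ?_
    intro x
    simp only [Function.comp]
    push_cast
    ring
  apply squeeze_zero' ?_ ?_ hlim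
  · filter_upwards with n
    positivity
  · filter_upwards [eventually_ge_atTop d] with n hn
    exact hr2 n d (by omega)
end
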